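/- arXiv:2509.16928 — 3 statements merged into one kernel-verified Lean document; each statement's English description precedes it below -/
import Mathlib

section
/- For every continuous function φ : [0,t] → ℝ and every s ∈ [0,t], one has min_{s ≤ u ≤ t} (2 max_{0 ≤ v ≤ u} φ(v) − φ(u)) = 2 max_{0 ≤ u ≤ s} φ(u) − min{ max_{0 ≤ u ≤ s} φ(u), max_{s ≤ u ≤ t} φ(u) }. -/
/-!
Write `M u` for the running maximum of `φ` on `[0, u]` and `N` for the maximum of `φ` on `[s, t]`.
For `u ∈ [s, t]` we have `M s ≤ M u`, `φ u ≤ M u` and `φ u ≤ N`, which give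
`2 M u - φ u ≥ 2 M s - min (M s) N`. For equality, let `w ∈ [s, t]` be a maximiser of `φ` there
and `u` the first time in `[s, w]` at which `φ` reaches the level `c = min (M s) N`; it exists by
the intermediate value theorem because `φ s ≤ c ≤ φ w`. Since `φ ≤ c ≤ M s` on `[s, u]`, the
running maximum has not moved, `M u = M s`, and `2 M u - φ u = 2 M s - c`.
-/

open Set

section Pitman

variable {f : ℝ → ℝ} {a b s : ℝ}

theorem exists_first_hit_of_continuousOn {c : ℝ} (hab : a ≤ b) (hf : ContinuousOn f (Icc a b))
    (ha : f a ≤ c) (hb : c ≤ f b) : ∃ u ∈ Icc a b, f u = c ∧ ∀ v ∈ Icc a u, f v ≤ c := by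
  set S := Icc a b ∩ f ⁻¹' Ici c
  have hS : IsClosed S := hf.preimage_isClosed_of_isClosed isClosed_Icc isClosed_Ici
  have hSb : BddBelow S := ⟨a, fun x hx => hx.1.1⟩
  have huS : sInf S ∈ S := hS.csInf_mem ⟨b, right_mem_Icc.2 hab, hb⟩ hSb
  have hbefore : ∀ v ∈ Icc a b, v < sInf S → f v < c := fun v hv hvu =>
    not_le.1 fun hcv => (csInf_le hSb ⟨hv, hcv⟩).not_gt hvu
  have hhit : f (sInf S) = c := by
    obtain ⟨x, hx, hfx⟩ := intermediate_value_Icc huS.1.1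
      (hf.mono (Icc_subset_Icc_right huS.1.2)) ⟨ha, huS.2⟩
    have hxS : x ∈ S := ⟨⟨hx.1, hx.2.trans huS.1.2⟩, hfx.ge⟩
    rwa [le_antisymm hx.2 (csInf_le hSb hxS)] at hfx
  refine ⟨sInf S, huS.1, hhit, fun v hv => ?_⟩
  rcases hv.2.lt_or_eq with hvu | rfl
  · exact (hbefore v ⟨hv.1, hv.2.trans huS.1.2⟩ hvu).le
  · exact hhit.le

theorem sSup_image_Icc_eq_max {u : ℝ} (hf : BddAbove (f '' Icc a u)) (has : a ≤ s) (hsu : s ≤ u) :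
    sSup (f '' Icc a u) = max (sSup (f '' Icc a s)) (sSup (f '' Icc s u)) := by
  rw [← Icc_union_Icc_eq_Icc has hsu, image_union] at hf ⊢
  exact csSup_union (hf.mono subset_union_left) ((nonempty_Icc.2 has).image f)
    (hf.mono subset_union_right) ((nonempty_Icc.2 hsu).image f)

theorem pitman_lowerBound (hf : ContinuousOn f (Icc a b)) (hs : s ∈ Icc a b) {u : ℝ}
    (hu : u ∈ Icc s b) :
    2 * sSup (f '' Icc a s) - min (sSup (f '' Icc a s)) (sSup (f '' Icc s b))
      ≤ 2 * sSup (f '' Icc a u) - f u := by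
  have hbdd : BddAbove (f '' Icc a b) := (isCompact_Icc.image_of_continuousOn hf).bddAbove
  have hmax := sSup_image_Icc_eq_max (hbdd.mono (image_mono (Icc_subset_Icc_right hu.2))) hs.1 hu.1
  have hMs : sSup (f '' Icc a s) ≤ sSup (f '' Icc a u) := by
    rw [hmax]
    exact le_max_left _ _
  have hMu : f u ≤ sSup (f '' Icc a u) :=
    le_csSup (hbdd.mono (image_mono (Icc_subset_Icc_right hu.2)))
      (mem_image_of_mem f ⟨hs.1.trans hu.1, le_rfl⟩)
  have hN : f u ≤ sSup (f '' Icc s b) :=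
    le_csSup (hbdd.mono (image_mono (Icc_subset_Icc_left hs.1))) (mem_image_of_mem f hu)
  have hmin : 2 * sSup (f '' Icc a s) - 2 * sSup (f '' Icc a u) + f u
      ≤ min (sSup (f '' Icc a s)) (sSup (f '' Icc s b)) := le_min (by linarith) (by linarith)
  linarith

theorem pitman_lowerBound_attained (hf : ContinuousOn f (Icc a b)) (hs : s ∈ Icc a b) :
    ∃ u ∈ Icc s b, 2 * sSup (f '' Icc a u) - f u
      = 2 * sSup (f '' Icc a s) - min (sSup (f '' Icc a s)) (sSup (f '' Icc s b)) := by
  set c := min (sSup (f '' Icc a s)) (sSup (f '' Icc s b))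
  have hbdd : BddAbove (f '' Icc a b) := (isCompact_Icc.image_of_continuousOn hf).bddAbove
  obtain ⟨w, hw, hfw⟩ := isCompact_Icc.exists_sSup_image_eq ⟨s, left_mem_Icc.2 hs.2⟩
    (hf.mono (Icc_subset_Icc_left hs.1))
  have hfs : f s ≤ c := le_min
    (le_csSup (hbdd.mono (image_mono (Icc_subset_Icc_right hs.2))) (mem_image_of_mem f ⟨hs.1, le_rfl⟩))
    (le_csSup (hbdd.mono (image_mono (Icc_subset_Icc_left hs.1)))
      (mem_image_of_mem f (left_mem_Icc.2 hs.2)))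
  obtain ⟨u, hu, hfu, hbelow⟩ := exists_first_hit_of_continuousOn hw.1
    (hf.mono (Icc_subset_Icc hs.1 hw.2)) hfs (hfw ▸ min_le_right _ _)
  have hsu : sSup (f '' Icc s u) ≤ sSup (f '' Icc a s) :=
    csSup_le ((nonempty_Icc.2 hu.1).image f)
      (forall_mem_image.2 fun v hv => (hbelow v hv).trans (min_le_left _ _))
  have hMu : sSup (f '' Icc a u) = sSup (f '' Icc a s) := by
    rw [sSup_image_Icc_eq_max (hbdd.mono (image_mono (Icc_subset_Icc_right (hu.2.trans hw.2))))
      hs.1 hu.1, max_eq_left hsu]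
  exact ⟨u, ⟨hu.1, hu.2.trans hw.2⟩, by rw [hMu, hfu]⟩

end Pitman

theorem pitman_min_identity_general (t : ℝ) (φ : ℝ → ℝ)
    (hφ : ContinuousOn φ (Icc 0 t)) (s : ℝ) (hs : s ∈ Icc 0 t) :
    sInf ((fun u => 2 * sSup (φ '' Icc 0 u) - φ u) '' Icc s t)
      = 2 * sSup (φ '' Icc 0 s)
        - min (sSup (φ '' Icc 0 s)) (sSup (φ '' Icc s t)) := by
  obtain ⟨u, hu, hval⟩ := pitman_lowerBound_attained hφ hs
  refine IsLeast.csInf_eq ⟨⟨u, hu, hval⟩, ?_⟩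
  rintro _ ⟨v, hv, rfl⟩
  exact pitman_lowerBound hφ hs hv

/-- Pitman's transform identity for the running minimum of `𝒫(φ)` over `[s,t]`. -/
theorem pitman_min_identity (t : ℝ) (ht : 0 < t) (φ : ℝ → ℝ)
    (hφ : ContinuousOn φ (Icc 0 t)) (s : ℝ) (hs : s ∈ Icc 0 t) :
    sInf ((fun u => 2 * sSup (φ '' Icc 0 u) - φ u) '' Icc s t)
      = 2 * sSup (φ '' Icc 0 s)
        - min (sSup (φ '' Icc 0 s)) (sSup (φ '' Icc s t)) :=
  pitman_min_identity_general t φ hφ s hs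
end

section
/- Let t > 0, x ∈ ℝ, and let φ : [0,t] → ℝ be continuous with φ(0) = 0 and φ(t) = −|x|. Then for all s ∈ [0,t], 2 max_{0 ≤ u ≤ s} φ(u) − min{ min_{s ≤ u ≤ t} 𝒫(φ)(u), 𝒫(φ)(t) − |x| } = min{ max_{0 ≤ u ≤ s} φ(u), (max_{s ≤ u ≤ t} φ(u))₊ }, where a₊ := max{a,0}. -/
open Set

/-!
Write `M` and `N` for the maxima of `φ` on `[0, s]` and `[s, t]`. For `u ∈ [s, t]` the running
maximum splits as `max M (max_{[s,u]} φ)`, and then `𝒫(φ)(u) ≥ max M (2M - N)` always, with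
equality at an argmax of `φ` on `[s, t]` when `N ≤ M`, and at the first time after `s` that `φ`
reaches `M` otherwise. Hence `min_{[s,t]} 𝒫(φ) = 2M - min M N`, while
`𝒫(φ)(t) - |x| = 2 max M N` because `φ(t) = -|x|`; the identity is then a case check using
`M ≥ φ(0) = 0`.
-/

section RunningMaximum

variable {φ : ℝ → ℝ} {a b c : ℝ}

theorem ContinuousOn.sSup_image_Icc_mono_right (hφ : ContinuousOn φ (Icc a c)) (hab : a ≤ b)
    (hbc : b ≤ c) : sSup (φ '' Icc a b) ≤ sSup (φ '' Icc a c) :=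
  csSup_le_csSup (isCompact_Icc.bddAbove_image hφ) ((nonempty_Icc.mpr hab).image φ)
    (image_mono (Icc_subset_Icc_right hbc))

theorem ContinuousOn.sSup_image_Icc_eq_max (hφ : ContinuousOn φ (Icc a c)) (hab : a ≤ b)
    (hbc : b ≤ c) :
    sSup (φ '' Icc a c) = max (sSup (φ '' Icc a b)) (sSup (φ '' Icc b c)) := by
  rw [← Icc_union_Icc_eq_Icc hab hbc, image_union,
    csSup_union (isCompact_Icc.bddAbove_image (hφ.mono (Icc_subset_Icc_right hbc)))
      ((nonempty_Icc.mpr hab).image φ)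
      (isCompact_Icc.bddAbove_image (hφ.mono (Icc_subset_Icc_left hab)))
      ((nonempty_Icc.mpr hbc).image φ)]

theorem ContinuousOn.exists_eq_forall_le_of_le_of_le (hφ : ContinuousOn φ (Icc a b))
    (hab : a ≤ b) (ha : φ a ≤ c) (hb : c ≤ φ b) :
    ∃ u ∈ Icc a b, φ u = c ∧ ∀ v ∈ Icc a u, φ v ≤ c := by
  set S := Icc a b ∩ φ ⁻¹' {c}
  have hS : IsCompact S :=
    isCompact_Icc.of_isClosed_subset
      (hφ.preimage_isClosed_of_isClosed isClosed_Icc isClosed_singleton) inter_subset_left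
  have hSne : S.Nonempty := by
    obtain ⟨u, hu, hφu⟩ := intermediate_value_Icc hab hφ ⟨ha, hb⟩
    exact ⟨u, hu, hφu⟩
  obtain ⟨hu, hφu⟩ := hS.sInf_mem hSne
  refine ⟨sInf S, hu, hφu, fun v hv => ?_⟩
  by_contra! hcv
  have hvb : v ≤ b := hv.2.trans hu.2
  obtain ⟨w, hw, hφw⟩ := intermediate_value_Icc hv.1
    (hφ.mono (Icc_subset_Icc_right hvb)) ⟨ha, hcv.le⟩
  have hwv : w = v :=
    le_antisymm hw.2 <|
      hv.2.trans (csInf_le ⟨a, fun z hz => hz.1.1⟩ ⟨⟨hw.1, hw.2.trans hvb⟩, hφw⟩)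
  exact hcv.ne' (hwv ▸ hφw)

/-- For `M = max_{[0,a]} φ`, the function minimized here is `𝒫(φ)` on `[a, b]`. -/
theorem ContinuousOn.sInf_pitman_image_Icc (hφ : ContinuousOn φ (Icc a b)) (hab : a ≤ b)
    {M : ℝ} (hM : φ a ≤ M) :
    sInf ((fun u => 2 * max M (sSup (φ '' Icc a u)) - φ u) '' Icc a b)
      = 2 * M - min M (sSup (φ '' Icc a b)) := by
  set N := sSup (φ '' Icc a b)
  refine IsLeast.csInf_eq ⟨?_, ?_⟩
  · obtain ⟨w, hw, hφw⟩ := (isCompact_Icc.image_of_continuousOn hφ).sSup_mem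
      ((nonempty_Icc.mpr hab).image φ)
    rcases le_total N M with hNM | hMN
    · refine ⟨w, hw, ?_⟩
      have hSw : sSup (φ '' Icc a w) ≤ M := (hφ.sSup_image_Icc_mono_right hw.1 hw.2).trans hNM
      simp only [max_eq_left hSw, hφw, min_eq_right hNM, N]
    · obtain ⟨u, hu, hφu, hle⟩ :=
        (hφ.mono (Icc_subset_Icc_right hw.2)).exists_eq_forall_le_of_le_of_le hw.1 hM
          (hφw ▸ hMN)
      have hSu : sSup (φ '' Icc a u) ≤ M :=
        csSup_le ((nonempty_Icc.mpr hu.1).image φ) (forall_mem_image.mpr hle)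
      refine ⟨u, ⟨hu.1, hu.2.trans hw.2⟩, ?_⟩
      simp only [max_eq_left hSu, hφu, min_eq_left hMN]
  · rintro _ ⟨u, hu, rfl⟩
    have hφu : φ u ≤ sSup (φ '' Icc a u) :=
      (hφ.mono (Icc_subset_Icc_right hu.2)).le_sSup_image_Icc ⟨hu.1, le_rfl⟩
    have hφuN : φ u ≤ N := hφ.le_sSup_image_Icc hu
    dsimp only
    rcases le_total M N with h | h <;> simp only [h, min_eq_left, min_eq_right] <;>
      linarith [le_max_left M (sSup (φ '' Icc a u)), le_max_right M (sSup (φ '' Icc a u))]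

end RunningMaximum

theorem levy_bridge_identity_general (t : ℝ) (x : ℝ) (φ : ℝ → ℝ)
    (hφ : ContinuousOn φ (Icc 0 t)) (h0 : φ 0 = 0) (hT : φ t = -|x|)
    (s : ℝ) (hs : s ∈ Icc 0 t) :
    2 * sSup (φ '' Icc 0 s)
        - min (sInf ((fun u => 2 * sSup (φ '' Icc 0 u) - φ u) '' Icc s t))
            ((2 * sSup (φ '' Icc 0 t) - φ t) - |x|)
      = min (sSup (φ '' Icc 0 s)) (max (sSup (φ '' Icc s t)) 0) := by
  obtain ⟨hs0, hst⟩ := hs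
  set M := sSup (φ '' Icc 0 s)
  set N := sSup (φ '' Icc s t)
  have hsplit : ∀ u ∈ Icc s t, sSup (φ '' Icc 0 u) = max M (sSup (φ '' Icc s u)) :=
    fun u hu => (hφ.mono (Icc_subset_Icc_right hu.2)).sSup_image_Icc_eq_max hs0 hu.1
  have hφ0s : ContinuousOn φ (Icc 0 s) := hφ.mono (Icc_subset_Icc_right hst)
  have hM0 : 0 ≤ M := h0 ▸ hφ0s.le_sSup_image_Icc ⟨le_rfl, hs0⟩
  have hinf : sInf ((fun u => 2 * sSup (φ '' Icc 0 u) - φ u) '' Icc s t) = 2 * M - min M N := by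
    rw [image_congr fun u hu => by rw [hsplit u hu]]
    exact (hφ.mono (Icc_subset_Icc_left hs0)).sInf_pitman_image_Icc hst
      (hφ0s.le_sSup_image_Icc ⟨hs0, le_rfl⟩)
  have hend : 2 * sSup (φ '' Icc 0 t) - φ t - |x| = 2 * max M N := by
    rw [hsplit t ⟨hst, le_rfl⟩, hT]
    ring
  rw [hinf, hend]
  simp only [min_def, max_def]
  split_ifs <;> linarith

/-- The key deterministic identity behind Lévy's theorem for Brownian bridges,
where `𝒫(φ)(u) = 2 max_{0≤v≤u} φ(v) − φ(u)`. -/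
theorem levy_bridge_identity (t : ℝ) (ht : 0 < t) (x : ℝ) (φ : ℝ → ℝ)
    (hφ : ContinuousOn φ (Icc 0 t)) (h0 : φ 0 = 0) (hT : φ t = -|x|)
    (s : ℝ) (hs : s ∈ Icc 0 t) :
    2 * sSup (φ '' Icc 0 s)
        - min (sInf ((fun u => 2 * sSup (φ '' Icc 0 u) - φ u) '' Icc s t))
            ((2 * sSup (φ '' Icc 0 t) - φ t) - |x|)
      = min (sSup (φ '' Icc 0 s)) (max (sSup (φ '' Icc s t)) 0) :=
  levy_bridge_identity_general t x φ hφ h0 hT s hs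
end

section
/- Let t > 0, y ∈ ℝ, and φ : [0,t] → ℝ continuous. Define ℒ_y(ψ)(s) := −ψ(s) + min{ 2 min_{s ≤ u ≤ t} ψ(u), ψ(t) + y } for continuous ψ. Then ℒ_{φ(t)}(𝒫(φ))(s) = φ(s) for all s ∈ [0,t], where 𝒫(φ)(u) = 2 max_{0 ≤ v ≤ u} φ(v) − φ(u). -/
/-!
Write `M u = max_{[0,u]} φ`, so that `𝒫(φ) = 2M − φ` and the claim reduces to
`min (min_{[s,t]} 𝒫(φ)) (M t) = M s`. Since `𝒫(φ) ≥ M` and `M` is monotone, the left side is at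
least `M s`. If `M t > M s`, then `φ` rises from `φ s ≤ M s` to above `M s` on `[s,t]`; at the first
time `w` it hits the level `M s` the running maximum is still `M s`, so `𝒫(φ)(w) = M s`.
-/

open Set

theorem exists_first_hit_Icc {α δ : Type*} [ConditionallyCompleteLinearOrder α]
    [TopologicalSpace α] [OrderTopology α] [DenselyOrdered α]
    [LinearOrder δ] [TopologicalSpace δ] [OrderClosedTopology δ]
    {f : α → δ} {a b : α} {c : δ} (hab : a ≤ b) (hf : ContinuousOn f (Icc a b))
    (hac : f a ≤ c) (hcb : c ≤ f b) :
    ∃ w ∈ Icc a b, f w = c ∧ ∀ u ∈ Icc a w, f u ≤ c := by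
  set Z := Icc a b ∩ f ⁻¹' {c}
  have hZ_closed : IsClosed Z :=
    hf.preimage_isClosed_of_isClosed isClosed_Icc isClosed_singleton
  have hZ_ne : Z.Nonempty := by
    obtain ⟨z, hz, hfz⟩ := intermediate_value_Icc hab hf ⟨hac, hcb⟩
    exact ⟨z, hz, hfz⟩
  have hZ_bdd : BddBelow Z := ⟨a, fun z hz => hz.1.1⟩
  obtain ⟨hw, hfw⟩ := hZ_closed.csInf_mem hZ_ne hZ_bdd
  refine ⟨sInf Z, hw, hfw, fun u hu => ?_⟩
  by_contra! hcu
  obtain ⟨z, hz, hfz⟩ := intermediate_value_Icc hu.1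
    (hf.mono (Icc_subset_Icc le_rfl (hu.2.trans hw.2))) ⟨hac, hcu.le⟩
  have hwz : sInf Z ≤ z := csInf_le hZ_bdd ⟨⟨hz.1, hz.2.trans (hu.2.trans hw.2)⟩, hfz⟩
  have hu_eq : u = sInf Z := le_antisymm hu.2 (hwz.trans hz.2)
  exact hcu.ne' (hu_eq ▸ hfw)

noncomputable def runningMax (φ : ℝ → ℝ) (u : ℝ) : ℝ := sSup (φ '' Icc 0 u)

noncomputable def pitman (φ : ℝ → ℝ) (u : ℝ) : ℝ := 2 * runningMax φ u - φ u

section RunningMax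

variable {φ : ℝ → ℝ} {t : ℝ}

theorem runningMax_le {u c : ℝ} (hu : 0 ≤ u) (h : ∀ v ∈ Icc 0 u, φ v ≤ c) :
    runningMax φ u ≤ c :=
  csSup_le ((nonempty_Icc.2 hu).image φ) (forall_mem_image.2 h)

variable (hφ : ContinuousOn φ (Icc 0 t))
include hφ

theorem bddAbove_image_Icc_zero {u : ℝ} (hut : u ≤ t) : BddAbove (φ '' Icc 0 u) :=
  (isCompact_Icc.image_of_continuousOn (hφ.mono (Icc_subset_Icc le_rfl hut))).bddAbove

theorem le_runningMax {u v : ℝ} (hut : u ≤ t) (hv : v ∈ Icc 0 u) : φ v ≤ runningMax φ u :=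
  le_csSup (bddAbove_image_Icc_zero hφ hut) (mem_image_of_mem φ hv)

theorem runningMax_mono {a b : ℝ} (ha : 0 ≤ a) (hab : a ≤ b) (hbt : b ≤ t) :
    runningMax φ a ≤ runningMax φ b :=
  runningMax_le ha fun _ hv => le_runningMax hφ hbt ⟨hv.1, hv.2.trans hab⟩

theorem exists_eq_runningMax {u : ℝ} (hu : 0 ≤ u) (hut : u ≤ t) :
    ∃ v ∈ Icc 0 u, φ v = runningMax φ u :=
  (isCompact_Icc.image_of_continuousOn (hφ.mono (Icc_subset_Icc le_rfl hut))).sSup_mem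
    ((nonempty_Icc.2 hu).image φ)

theorem runningMax_le_pitman {u : ℝ} (hu : 0 ≤ u) (hut : u ≤ t) :
    runningMax φ u ≤ pitman φ u := by
  have := le_runningMax hφ hut ⟨hu, le_rfl⟩
  unfold pitman
  linarith

theorem exists_pitman_eq_runningMax {s : ℝ} (hs : 0 ≤ s) (hst : s ≤ t)
    (hlt : runningMax φ s < runningMax φ t) :
    ∃ w ∈ Icc s t, pitman φ w = runningMax φ s := by
  obtain ⟨v, hv, hφv⟩ := exists_eq_runningMax hφ (hs.trans hst) le_rfl
  have hsv : s ≤ v := by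
    by_contra! hvs
    have := le_runningMax hφ hst ⟨hv.1, hvs.le⟩
    linarith
  obtain ⟨w, hw, hφw, hφ_le⟩ := exists_first_hit_Icc hsv
    (hφ.mono (Icc_subset_Icc hs hv.2)) (le_runningMax hφ hst ⟨hs, le_rfl⟩) (hφv ▸ hlt.le)
  have hMw : runningMax φ w = runningMax φ s := by
    refine le_antisymm (runningMax_le (hs.trans hw.1) fun u hu => ?_)
      (runningMax_mono hφ hs hw.1 (hw.2.trans hv.2))
    rcases le_total u s with hus | hsu
    · exact le_runningMax hφ hst ⟨hu.1, hus⟩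
    · exact hφ_le u ⟨hsu, hu.2⟩
  refine ⟨w, ⟨hw.1, hw.2.trans hv.2⟩, ?_⟩
  rw [pitman, hMw, hφw]
  ring

theorem min_sInf_pitman_runningMax {s : ℝ} (hs : 0 ≤ s) (hst : s ≤ t) :
    min (sInf (pitman φ '' Icc s t)) (runningMax φ t) = runningMax φ s := by
  have hlower : ∀ x ∈ pitman φ '' Icc s t, runningMax φ s ≤ x := by
    rintro _ ⟨u, hu, rfl⟩
    exact (runningMax_mono hφ hs hu.1 hu.2).trans
      (runningMax_le_pitman hφ (hs.trans hu.1) hu.2)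
  refine le_antisymm ?_
    (le_min (le_csInf ((nonempty_Icc.2 hst).image _) hlower) (runningMax_mono hφ hs hst le_rfl))
  rcases le_or_gt (runningMax φ t) (runningMax φ s) with hle | hlt
  · exact (min_le_right _ _).trans hle
  · obtain ⟨w, hw, hPw⟩ := exists_pitman_eq_runningMax hφ hs hst hlt
    exact (min_le_left _ _).trans (hPw ▸ csInf_le ⟨_, hlower⟩ (mem_image_of_mem _ hw))

end RunningMax

theorem pitman_left_inverse_general (t : ℝ) (φ : ℝ → ℝ)
    (hφ : ContinuousOn φ (Icc 0 t)) (s : ℝ) (hs : s ∈ Icc 0 t) :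
    -(2 * sSup (φ '' Icc 0 s) - φ s)
        + min (2 * sInf ((fun u => 2 * sSup (φ '' Icc 0 u) - φ u) '' Icc s t))
            ((2 * sSup (φ '' Icc 0 t) - φ t) + φ t)
      = φ s := by
  change -pitman φ s + min (2 * sInf (pitman φ '' Icc s t)) (pitman φ t + φ t) = φ s
  have hmin := min_sInf_pitman_runningMax hφ hs.1 hs.2
  have hPt : pitman φ t + φ t = 2 * runningMax φ t := by rw [pitman]; ring
  rw [hPt, ← mul_min_of_nonneg _ _ zero_le_two, hmin, pitman]
  ring

/-- `ℒ_{φ(t)}` is a left inverse of the Pitman transform: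
`ℒ_{φ(t)}(𝒫(φ))(s) = φ(s)` for all `s ∈ [0,t]`, where
`𝒫(φ)(u) = 2 max_{0≤v≤u} φ(v) − φ(u)` and
`ℒ_y(ψ)(s) = −ψ(s) + min{2 min_{s≤u≤t} ψ(u), ψ(t) + y}`. -/
theorem pitman_left_inverse (t : ℝ) (ht : 0 < t) (y : ℝ) (φ : ℝ → ℝ)
    (hφ : ContinuousOn φ (Icc 0 t)) (s : ℝ) (hs : s ∈ Icc 0 t) :
    -(2 * sSup (φ '' Icc 0 s) - φ s)
        + min (2 * sInf ((fun u => 2 * sSup (φ '' Icc 0 u) - φ u) '' Icc s t))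
            ((2 * sSup (φ '' Icc 0 t) - φ t) + φ t)
      = φ s :=
  pitman_left_inverse_general t φ hφ s hs
end
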